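/- Let A be a finite set of non-negative integers with 0 ∈ A, gcd(A) = 1, and b := max A (so b ≥ 1). Suppose that for each a ∈ {0, …, b−1} the pair (g_a, k_a) is the virtual generator of S_a. Then ⋃_{h≥0} hA = {g_a + b·n : 0 ≤ a < b, n ∈ ℕ}. -/
import Mathlib


open Pointwise

/-- The `h`-fold sumset `hA` of a finite set of naturals:
`0A = {0}` and `(n+1)A = A + nA`. -/
def iterFin (A : Finset ℕ) : ℕ → Finset ℕ
  | 0 => {0}
  | n + 1 => A + iterFin A n

/-- The cone over `A`: pairs `(n, h)` with `n ∈ hA`. -/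
def coneNat (A : Finset ℕ) : Set (ℕ × ℕ) := {p | p.1 ∈ iterFin A p.2}

/-- `Λ⁺ = {(bn, m+n) : m, n ∈ ℕ}`. -/
def lambdaPlus (b : ℕ) : Set (ℕ × ℕ) := {q | ∃ m n : ℕ, q = (b * n, m + n)}

/-- The residue class `S_a`: elements of the cone whose first coordinate is `≡ a (mod b)`. -/
def resClass (A : Finset ℕ) (b a : ℕ) : Set (ℕ × ℕ) := {p ∈ coneNat A | p.1 % b = a}

theorem tangent_cone_from_virtual_generators (A : Finset ℕ) (h0 : 0 ∈ A)
    (hgcd : A.gcd id = 1) (b : ℕ) (hb : IsGreatest (A : Set ℕ) b) (hb1 : 1 ≤ b)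
    (vg : ℕ → ℕ × ℕ)
    (hvg : ∀ a < b, resClass A b a ⊆ (fun r => vg a + r) '' lambdaPlus b ∧
      (((fun r => vg a + r) '' lambdaPlus b) \ resClass A b a).Finite) :
    (⋃ h : ℕ, (iterFin A h : Set ℕ)) =
      {x : ℕ | ∃ a < b, ∃ n : ℕ, x = (vg a).1 + b * n} := by
  ext x
  simp only [Set.mem_iUnion, Finset.mem_coe, Set.mem_setOf_eq]
  constructor
  · rintro ⟨h, hx⟩
    refine ⟨x % b, Nat.mod_lt _ hb1, ?_⟩
    have hmem : ((x, h) : ℕ × ℕ) ∈ resClass A b (x % b) := ⟨hx, rfl⟩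
    obtain ⟨r, hr, heq⟩ := (hvg (x % b) (Nat.mod_lt _ hb1)).1 hmem
    obtain ⟨m, n, rfl⟩ := hr
    refine ⟨n, ?_⟩
    have := congrArg Prod.fst heq
    simpa using this.symm
  · rintro ⟨a, ha, n, rfl⟩
    have hfin := (hvg a ha).2
    by_contra hcon
    push_neg at hcon
    have hsub : Set.range (fun m : ℕ => (((vg a).1 + b * n, (vg a).2 + (m + n)) : ℕ × ℕ)) ⊆
        (((fun r => vg a + r) '' lambdaPlus b) \ resClass A b a) := by
      rintro p ⟨m, rfl⟩
      refine ⟨⟨(b * n, m + n), ⟨m, n, rfl⟩, rfl⟩, ?_⟩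
      intro hp
      exact hcon ((vg a).2 + (m + n)) hp.1
    have hffin : (Set.range (fun m : ℕ =>
        (((vg a).1 + b * n, (vg a).2 + (m + n)) : ℕ × ℕ))).Finite := hfin.subset hsub
    have hinj : Function.Injective (fun m : ℕ =>
        (((vg a).1 + b * n, (vg a).2 + (m + n)) : ℕ × ℕ)) := by
      intro m₁ m₂ hmm
      simpa using hmm
    exact (Set.infinite_range_of_injective hinj) hffin
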